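/- Two genomes A and B over the same finite set of N genes are equal if and only if N = C + I/2, where C is the number of cycle components and I is the number of path components with an odd number of edges in the adjacency graph AG(A,B). -/

import Mathlib

/-! Basic definitions for genomes and the DCJ model, following
Bergeron–Mixtacki–Stoye and Yancopoulos et al. -/

/-- An *extremity* of a gene: the gene together with a Boolean distinguishing
its head (`true`) from its tail (`false`).  A gene set of cardinality `N`
has `2 * N` extremities. -/
abbrev Extremity (G : Type*) := G × Bool

/-- A *genome* over the gene set `G` is a partition of the set of extremities
into blocks of size two (*adjacencies*) and blocks of size one (*telomeres*).
Such a partition is faithfully encoded by the involution sending each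
extremity to the other element of its block (to itself for a telomere). -/
structure Genome (G : Type*) where
  f : Extremity G → Extremity G
  invol : Function.Involutive f

namespace Genome

variable {G : Type*}

/-- The block of the extremity `x` in the genome `A`: either the adjacency
`{x, A.f x}` (when `A.f x ≠ x`) or the telomere `{x}` (when `A.f x = x`). -/
def block (A : Genome G) (x : Extremity G) : Set (Extremity G) := {x, A.f x}

/-- The blocks (adjacencies and telomeres) of a genome. -/
def blocks (A : Genome G) : Set (Set (Extremity G)) := {s | ∃ x, s = A.block x}

end Genome

section AdjacencyGraph

variable {G : Type*}

/-- The edges of the adjacency graph `AG(A,B)` are indexed by the extremities: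
the edge of the extremity `x` joins the block of `x` in `A` with the block of
`x` in `B`.  Two edges `x`, `y` are related by `agStep A B` when they share an
endpoint, i.e. when `y` lies in the `A`-block or in the `B`-block of `x`. -/
def agStep (A B : Genome G) (x y : Extremity G) : Prop := A.f x = y ∨ B.f x = y

/-- The setoid identifying edges of `AG(A,B)` that lie in the same connected
component. -/
def agSetoid (A B : Genome G) : Setoid (Extremity G) :=
  ⟨Relation.EqvGen (agStep A B), Relation.EqvGen.is_equivalence _⟩

/-- The set of edges of the connected component `q` of `AG(A,B)`. -/
def componentEdges (A B : Genome G) (q : Quotient (agSetoid A B)) :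
    Set (Extremity G) :=
  {x | Quotient.mk (agSetoid A B) x = q}

/-- `IsAltPath fA fB n K` : the edge set `K` consists of `n + 1` distinct
edges `e 0, …, e n` forming a simple path: consecutive edges share a block,
alternately a block of the first genome (encoded by the involution `fA`) and
of the second one (`fB`), starting with `fA`; the two free gene ends of the
terminal edges are telomeres (of the second genome at `e 0`, and of the
appropriate genome at `e n` according to parity). -/
def IsAltPath (fA fB : Extremity G → Extremity G) (n : ℕ)
    (K : Set (Extremity G)) : Prop :=
  ∃ e : Fin (n + 1) → Extremity G,
    Function.Injective e ∧ Set.range e = K ∧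
    (∀ i : ℕ, ∀ h : i + 1 < n + 1,
      e ⟨i + 1, h⟩ = (if Even i then fA else fB) (e ⟨i, by omega⟩)) ∧
    fB (e 0) = e 0 ∧
    (if Odd n then fB else fA) (e ⟨n, by omega⟩) = e ⟨n, by omega⟩

/-- `IsAltCycle fA fB K` : the edge set `K` consists of `2 * n` distinct edges
(for some `n > 0`) arranged in a cycle, consecutive edges sharing a block,
alternately a block of the first genome (`fA`) and of the second (`fB`). -/
def IsAltCycle (fA fB : Extremity G → Extremity G) (K : Set (Extremity G)) :
    Prop :=
  ∃ n : ℕ, 0 < n ∧ ∃ e : ZMod (2 * n) → Extremity G,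
    Function.Injective e ∧ Set.range e = K ∧
    ∀ i : ZMod (2 * n), e (i + 1) = (if Even i.val then fA else fB) (e i)

/-- The component `q` of `AG(A,B)` is a cycle. -/
def IsCycleComponent (A B : Genome G) (q : Quotient (agSetoid A B)) : Prop :=
  IsAltCycle A.f B.f (componentEdges A B q) ∨
    IsAltCycle B.f A.f (componentEdges A B q)

/-- The component `q` of `AG(A,B)` is a simple path (with some number
`n + 1 ≥ 1` of edges). -/
def IsPathComponent (A B : Genome G) (q : Quotient (agSetoid A B)) : Prop :=
  ∃ n : ℕ,
    IsAltPath A.f B.f n (componentEdges A B q) ∨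
      IsAltPath B.f A.f n (componentEdges A B q)

/-- The component `q` of `AG(A,B)` is a simple path with an odd number of
edges (`n + 1` edges with `n` even). -/
def IsOddPathComponent (A B : Genome G) (q : Quotient (agSetoid A B)) : Prop :=
  ∃ n : ℕ, Even n ∧
    (IsAltPath A.f B.f n (componentEdges A B q) ∨
      IsAltPath B.f A.f n (componentEdges A B q))

/-- `C`, the number of cycle components of `AG(A,B)`. -/
noncomputable def numCycles (A B : Genome G) : ℕ :=
  Nat.card {q : Quotient (agSetoid A B) // IsCycleComponent A B q}

/-- `I`, the number of path components of `AG(A,B)` with an odd number of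
edges. -/
noncomputable def numOddPaths (A B : Genome G) : ℕ :=
  Nat.card {q : Quotient (agSetoid A B) // IsOddPathComponent A B q}

end AdjacencyGraph

section DCJ

variable {G : Type*} [DecidableEq G]

/-- Rewiring of the pairing `f` that matches `p` with `r` and `q` with `s`,
leaving everything else unchanged. -/
def rewire (f : Extremity G → Extremity G) (p q r s : Extremity G) :
    Extremity G → Extremity G := fun x =>
  if x = p then r else if x = r then p else if x = q then s else
    if x = s then q else f x

/-- A single DCJ operation transforming the genome `A` into the genome `A'`:
* two adjacencies `{p,q}`, `{r,s}` are replaced by `{p,r}`, `{q,s}` or by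
  `{p,s}`, `{q,r}`;
* an adjacency `{p,q}` and a telomere `{r}` are replaced by `{p,r}`, `{q}` or
  by `{p}`, `{q,r}`;
* an adjacency `{p,q}` is replaced by the two telomeres `{p}`, `{q}`;
* two telomeres `{p}`, `{q}` are replaced by the adjacency `{p,q}`.
All other blocks of `A` are unchanged. -/
def DCJStep (A A' : Genome G) : Prop :=
  (∃ p q r s : Extremity G, A.f p = q ∧ p ≠ q ∧ A.f r = s ∧ r ≠ s ∧
      p ≠ r ∧ p ≠ s ∧ q ≠ r ∧ q ≠ s ∧
      (A'.f = rewire A.f p q r s ∨ A'.f = rewire A.f p q s r)) ∨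
  (∃ p q r : Extremity G, A.f p = q ∧ p ≠ q ∧ A.f r = r ∧ r ≠ p ∧ r ≠ q ∧
      (A'.f = rewire A.f p q r q ∨ A'.f = rewire A.f q p r p)) ∨
  (∃ p q : Extremity G, A.f p = q ∧ p ≠ q ∧ A'.f = rewire A.f p q p q) ∨
  (∃ p q : Extremity G, A.f p = p ∧ A.f q = q ∧ p ≠ q ∧
      A'.f = rewire A.f p q q p)

/-- The DCJ distance between two genomes: the least number of DCJ operations
transforming `A` into `B`. -/
noncomputable def dcjDist (A B : Genome G) : ℕ :=
  sInf {n : ℕ | ∃ g : ℕ → Genome G, g 0 = A ∧ g n = B ∧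
    ∀ i < n, DCJStep (g i) (g (i + 1))}

end DCJ

/-! Every component of `AG(A,B)` with `k` edges contributes at most `k` to `2C + I`: a cycle has
an even number `k ≥ 2` of edges and contributes `2`, an odd path has `k ≥ 1` edges and contributes
`1`, any other component contributes `0`. As the components partition the `2N` edges,
`2N ≥ 2C + I`, with equality iff every component is a cycle with two edges or a path with one
edge, i.e. iff every extremity has the same partner in `A` and in `B`. -/

section AdjacencyGraphComponents

variable {G : Type*}

theorem Genome.f_injective : Function.Injective (Genome.f (G := G)) := by
  rintro ⟨f, _⟩ ⟨g, _⟩ rfl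
  rfl

section AltPathCycle

variable {f g : Extremity G → Extremity G} {K : Set (Extremity G)}

theorem IsAltPath.card_eq {n : ℕ} (h : IsAltPath f g n K) : Nat.card K = n + 1 := by
  obtain ⟨e, he, rfl, -⟩ := h
  rw [Nat.card_range_of_injective he, Nat.card_fin]

theorem IsAltPath.fixed_of_zero (h : IsAltPath f g 0 K) {x : Extremity G} (hx : x ∈ K) :
    f x = x ∧ g x = x := by
  obtain ⟨e, -, rfl, -, h0, h1⟩ := h
  obtain ⟨i, rfl⟩ := hx
  fin_cases i
  exact ⟨by simpa using h1, h0⟩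

theorem IsAltCycle.exists_card_eq (h : IsAltCycle f g K) : ∃ n, 0 < n ∧ Nat.card K = 2 * n := by
  obtain ⟨n, hn, e, he, rfl, -⟩ := h
  have : NeZero (2 * n) := ⟨by omega⟩
  exact ⟨n, hn, by rw [Nat.card_range_of_injective he, Nat.card_zmod]⟩

theorem IsAltCycle.eq_of_card_eq_two (hf : Function.Involutive f) (hg : Function.Involutive g)
    (h : IsAltCycle f g K) (hK : Nat.card K = 2) {x : Extremity G} (hx : x ∈ K) : f x = g x := by
  obtain ⟨n, hn, e, he, rfl, hstep⟩ := h
  obtain rfl : n = 1 := by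
    have : NeZero (2 * n) := ⟨by omega⟩
    rw [Nat.card_range_of_injective he, Nat.card_zmod] at hK
    omega
  have h01 : e 1 = f (e 0) := hstep 0
  have h10 : e 0 = g (e 1) := hstep 1
  obtain ⟨i, rfl⟩ := hx
  rcases (by decide : ∀ i : ZMod (2 * 1), i = 0 ∨ i = 1) i with rfl | rfl
  · rw [← h01, h10, hg]
  · rw [h01, hf, ← h01, h10]

theorem isAltPath_singleton {x : Extremity G} (hx : f x = x) : IsAltPath f f 0 {x} :=
  ⟨fun _ => x, fun a b _ => Subsingleton.elim (α := Fin 1) a b, Set.range_const,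
    fun _ h => by omega, hx, hx⟩

theorem isAltCycle_pair (hf : Function.Involutive f) {x : Extremity G} (hx : f x ≠ x) :
    IsAltCycle f f {x, f x} := by
  refine ⟨1, one_pos, ![x, f x], ?_, ?_, ?_⟩
  · intro i j hij
    fin_cases i <;> fin_cases j <;> first | rfl | simp_all [eq_comm]
  · exact Matrix.range_cons_cons_empty x (f x) ![]
  · intro i
    fin_cases i <;> simp [hf x] <;> rfl

end AltPathCycle

theorem eqvGen_agStep_self_iff (A : Genome G) {x y : Extremity G} :
    Relation.EqvGen (agStep A A) x y ↔ y = x ∨ y = A.f x := by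
  refine ⟨fun h => ?_, ?_⟩
  · induction h with
    | rel a b hab => rcases hab with h | h <;> exact Or.inr h.symm
    | refl a => exact Or.inl rfl
    | symm a b _ ih =>
      rcases ih with rfl | rfl
      · exact Or.inl rfl
      · exact Or.inr (A.invol a).symm
    | trans a b c _ _ ih₁ ih₂ =>
      rcases ih₁ with rfl | rfl
      · exact ih₂
      · rcases ih₂ with rfl | rfl
        · exact Or.inr rfl
        · exact Or.inl (A.invol a)
  · rintro (rfl | rfl)
    · exact Relation.EqvGen.refl _
    · exact Relation.EqvGen.rel _ _ (Or.inl rfl)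

theorem componentEdges_self (A : Genome G) (x : Extremity G) :
    componentEdges A A ⟦x⟧ = {x, A.f x} := by
  ext y
  exact eq_comm.trans (Quotient.eq.trans (eqvGen_agStep_self_iff A))

theorem mem_componentEdges_mk (A B : Genome G) (x : Extremity G) :
    x ∈ componentEdges A B ⟦x⟧ :=
  rfl

theorem sum_card_componentEdges [Fintype G] (A B : Genome G)
    [Fintype (Quotient (agSetoid A B))] :
    ∑ q, Nat.card (componentEdges A B q) = 2 * Fintype.card G := by
  rw [← Nat.card_sigma]
  refine (Nat.card_congr (Equiv.sigmaFiberEquiv (Quotient.mk (agSetoid A B)))).trans ?_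
  rw [Nat.card_eq_fintype_card, Fintype.card_prod, Fintype.card_bool, mul_comm]

theorem one_le_card_componentEdges [Finite G] (A B : Genome G) (q : Quotient (agSetoid A B)) :
    1 ≤ Nat.card (componentEdges A B q) := by
  induction q using Quotient.inductionOn with
  | h x =>
    have : Nonempty (componentEdges A B ⟦x⟧) := ⟨⟨x, mem_componentEdges_mk A B x⟩⟩
    exact Nat.card_pos

section Weight

variable {A B : Genome G} {q : Quotient (agSetoid A B)}

theorem IsCycleComponent.exists_card_eq (h : IsCycleComponent A B q) :
    ∃ n, 0 < n ∧ Nat.card (componentEdges A B q) = 2 * n := by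
  rcases h with h | h <;> exact h.exists_card_eq

theorem IsOddPathComponent.odd_card (h : IsOddPathComponent A B q) :
    Odd (Nat.card (componentEdges A B q)) := by
  obtain ⟨n, hn, h | h⟩ := h <;> rw [h.card_eq] <;> exact hn.add_one

theorem IsCycleComponent.not_isOddPathComponent (h : IsCycleComponent A B q) :
    ¬IsOddPathComponent A B q := by
  obtain ⟨n, -, hn⟩ := h.exists_card_eq
  intro h'
  exact Nat.not_even_iff_odd.mpr h'.odd_card ⟨n, by omega⟩

open Classical in
noncomputable def componentWeight (A B : Genome G) (q : Quotient (agSetoid A B)) : ℕ :=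
  (if IsCycleComponent A B q then 2 else 0) + (if IsOddPathComponent A B q then 1 else 0)

theorem componentWeight_of_isCycleComponent (h : IsCycleComponent A B q) :
    componentWeight A B q = 2 := by
  simp [componentWeight, h, h.not_isOddPathComponent]

theorem componentWeight_of_isOddPathComponent (h : IsOddPathComponent A B q) :
    componentWeight A B q = 1 := by
  have hc : ¬IsCycleComponent A B q := fun hc => hc.not_isOddPathComponent h
  simp [componentWeight, h, hc]

theorem componentWeight_eq_zero (hc : ¬IsCycleComponent A B q) (ho : ¬IsOddPathComponent A B q) :
    componentWeight A B q = 0 := by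
  simp [componentWeight, hc, ho]

theorem componentWeight_le_card [Finite G] :
    componentWeight A B q ≤ Nat.card (componentEdges A B q) := by
  by_cases hc : IsCycleComponent A B q
  · obtain ⟨n, hn, hcard⟩ := hc.exists_card_eq
    rw [componentWeight_of_isCycleComponent hc]
    omega
  by_cases ho : IsOddPathComponent A B q
  · rw [componentWeight_of_isOddPathComponent ho]
    exact one_le_card_componentEdges A B q
  · simp [componentWeight_eq_zero hc ho]

theorem componentWeight_self (A : Genome G) (q : Quotient (agSetoid A A)) :
    componentWeight A A q = Nat.card (componentEdges A A q) := by
  induction q using Quotient.inductionOn with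
  | h x =>
    rw [componentEdges_self]
    by_cases hx : A.f x = x
    · have hodd : IsOddPathComponent A A ⟦x⟧ := ⟨0, Even.zero, Or.inl (by
        rw [componentEdges_self, hx, Set.pair_eq_singleton]
        exact isAltPath_singleton hx)⟩
      rw [componentWeight_of_isOddPathComponent hodd, hx, Set.pair_eq_singleton, Nat.card_unique]
    · have hcyc : IsCycleComponent A A ⟦x⟧ := Or.inl (by
        rw [componentEdges_self]
        exact isAltCycle_pair A.invol hx)
      rw [componentWeight_of_isCycleComponent hcyc, Nat.card_coe_set_eq,
        Set.ncard_pair (Ne.symm hx)]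

theorem Genome.f_eq_of_card_le_componentWeight [Finite G] {x : Extremity G}
    (h : Nat.card (componentEdges A B ⟦x⟧) ≤ componentWeight A B ⟦x⟧) : A.f x = B.f x := by
  have hx := mem_componentEdges_mk A B x
  by_cases hc : IsCycleComponent A B ⟦x⟧
  · obtain ⟨n, hn, hcard⟩ := hc.exists_card_eq
    rw [componentWeight_of_isCycleComponent hc] at h
    have h2 : Nat.card (componentEdges A B ⟦x⟧) = 2 := by omega
    rcases hc with hc | hc
    · exact hc.eq_of_card_eq_two A.invol B.invol h2 hx
    · exact (hc.eq_of_card_eq_two B.invol A.invol h2 hx).symm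
  by_cases ho : IsOddPathComponent A B ⟦x⟧
  · rw [componentWeight_of_isOddPathComponent ho] at h
    obtain ⟨n, -, hp | hp⟩ := ho <;> obtain rfl : n = 0 := (by have := hp.card_eq; omega) <;>
      rw [(hp.fixed_of_zero hx).1, (hp.fixed_of_zero hx).2]
  · have := one_le_card_componentEdges A B ⟦x⟧
    rw [componentWeight_eq_zero hc ho] at h
    omega

end Weight

theorem sum_componentWeight (A B : Genome G) [Fintype (Quotient (agSetoid A B))] :
    ∑ q, componentWeight A B q = 2 * numCycles A B + numOddPaths A B := by
  classical
  simp [componentWeight, Finset.sum_add_distrib, Finset.sum_ite, numCycles, numOddPaths,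
    Nat.card_eq_fintype_card, Fintype.card_subtype, mul_comm]

theorem Genome.eq_iff_two_mul_card_eq [Fintype G] (A B : Genome G) :
    A = B ↔ 2 * Fintype.card G = 2 * numCycles A B + numOddPaths A B := by
  let := Fintype.ofFinite (Quotient (agSetoid A B))
  rw [← sum_card_componentEdges A B, ← sum_componentWeight A B]
  constructor
  · rintro rfl
    exact Finset.sum_congr rfl fun q _ => (componentWeight_self A q).symm
  · intro h
    have hq := (Finset.sum_eq_sum_iff_of_le fun q _ => componentWeight_le_card).mp h.symm
    exact Genome.f_injective <| funext fun x =>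
      Genome.f_eq_of_card_le_componentWeight (hq _ (Finset.mem_univ _)).ge

end AdjacencyGraphComponents

/-- Two genomes over the same finite set of `N` genes are equal iff
`N = C + I/2`, where `C` is the number of cycles and `I` the number of odd
paths in the adjacency graph `AG(A,B)`. -/
theorem genomes_eq_iff_card_eq_cycles_add_half_oddPaths
    {G : Type*} [Fintype G] (A B : Genome G) :
    A = B ↔
      (Fintype.card G : ℚ) =
        (numCycles A B : ℚ) + (numOddPaths A B : ℚ) / 2 := by
  rw [Genome.eq_iff_two_mul_card_eq, ← Nat.cast_inj (R := ℚ)]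
  push_cast
  constructor <;> intro h <;> linarith
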